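/- arXiv:1702.00074 — 2 statements merged into one kernel-verified Lean document; each statement's English description precedes it below -/
import Mathlib

section
/- Let N be a positive basis of ℝ^m and ψ_∞^N(u) := max_{n ∈ N} ⟨n, u⟩. Then there exists γ > 0 such that ψ_∞^N(u) ≥ γ ‖u‖_∞ for all u ∈ ℝ^m. -/
/-- For a positive basis N of ℝ^m there is γ > 0 with
ψ_∞^N(u) ≥ γ ‖u‖_∞ for all u. -/
theorem stmt_5 {m l : ℕ} (hl : 0 < l) (n : Fin l → (Fin m → ℝ))
    (hpos : ∀ u : Fin m → ℝ, ∃ α : Fin l → ℝ, (∀ i, 0 ≤ α i) ∧ u = ∑ i, α i • n i)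
    (ψ : (Fin m → ℝ) → ℝ)
    (hψ : ∀ u, ψ u = Finset.univ.sup'
      (Finset.univ_nonempty_iff.mpr ⟨⟨0, hl⟩⟩) (fun i => ∑ j, n i j * u j)) :
    ∃ γ : ℝ, 0 < γ ∧ ∀ u : Fin m → ℝ, γ * ‖u‖ ≤ ψ u := by
  choose αp hαp0 hαp using fun k : Fin m => hpos (Pi.single k 1)
  choose αm hαm0 hαm using fun k : Fin m => hpos (-(Pi.single k 1))
  set C : ℝ := 1 + ∑ k, ∑ i, (αp k i + αm k i) with hC
  have hsum0 : (0:ℝ) ≤ ∑ k, ∑ i, (αp k i + αm k i) :=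
    Finset.sum_nonneg fun k _ => Finset.sum_nonneg fun i _ =>
      add_nonneg (hαp0 k i) (hαm0 k i)
  have hCpos : 0 < C := by rw [hC]; linarith
  refine ⟨C⁻¹, inv_pos.mpr hCpos, fun u => ?_⟩
  rcases eq_or_ne u 0 with rfl | hu
  · rw [hψ]
    simp
  -- sum swap
  have hswap : ∀ (α : Fin l → ℝ),
      ∑ j, (∑ i, α i • n i) j * u j = ∑ i, α i * ∑ j, n i j * u j := by
    intro α
    simp only [Finset.sum_apply, Pi.smul_apply, smul_eq_mul, Finset.sum_mul,
      Finset.mul_sum]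
    rw [Finset.sum_comm]
    simp only [mul_assoc]
  -- positivity of ψ u
  have hψpos : 0 < ψ u := by
    obtain ⟨α, hα0, hαu⟩ := hpos u
    have hsq : 0 < ∑ j, u j * u j := by
      have h1 : ∀ j, 0 ≤ u j * u j := fun j => mul_self_nonneg _
      rcases Function.ne_iff.mp hu with ⟨k, hk⟩
      refine Finset.sum_pos' (fun j _ => h1 j) ⟨k, Finset.mem_univ k, ?_⟩
      exact mul_self_pos.mpr hk
    have heq := hswap α
    rw [← hαu] at heq
    rw [heq] at hsq
    obtain ⟨i, _, hi⟩ : ∃ i ∈ Finset.univ, 0 < α i * ∑ j, n i j * u j := by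
      by_contra h
      push_neg at h
      have : ∑ i, α i * ∑ j, n i j * u j ≤ 0 :=
        Finset.sum_nonpos fun i hi => h i hi
      linarith
    have hSi : 0 < ∑ j, n i j * u j := by
      rcases lt_or_ge 0 (∑ j, n i j * u j) with h | h
      · exact h
      · exfalso
        have : α i * ∑ j, n i j * u j ≤ 0 :=
          mul_nonpos_of_nonneg_of_nonpos (hα0 i) h
        linarith
    calc (0:ℝ) < ∑ j, n i j * u j := hSi
    _ ≤ ψ u := by rw [hψ]; exact Finset.le_sup' (fun i => ∑ j, n i j * u j) (Finset.mem_univ i)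
  -- general decomposition bound
  have key : ∀ (v : Fin m → ℝ) (α : Fin l → ℝ), (∀ i, 0 ≤ α i) →
      v = ∑ i, α i • n i → ∑ j, v j * u j ≤ (∑ i, α i) * ψ u := by
    intro v α hα0 hv
    have : ∑ j, v j * u j = ∑ i, α i * ∑ j, n i j * u j := by
      rw [hv]; exact hswap α
    rw [this, Finset.sum_mul]
    refine Finset.sum_le_sum fun i _ => ?_
    refine mul_le_mul_of_nonneg_left ?_ (hα0 i)
    rw [hψ]; exact Finset.le_sup' (fun i => ∑ j, n i j * u j) (Finset.mem_univ i)
  -- pick the coordinate realizing the sup norm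
  have hne : Nonempty (Fin m) := by
    rcases Function.ne_iff.mp hu with ⟨k, _⟩
    exact ⟨k⟩
  obtain ⟨k, -, hk⟩ := Finset.exists_max_image Finset.univ (fun j => |u j|)
    (Finset.univ_nonempty_iff.mpr hne)
  have hnorm : ‖u‖ = |u k| := by
    refine le_antisymm ?_ ?_
    · refine (pi_norm_le_iff_of_nonneg (abs_nonneg _)).mpr fun j => ?_
      rw [Real.norm_eq_abs]
      exact hk j (Finset.mem_univ j)
    · rw [← Real.norm_eq_abs]
      exact norm_le_pi_norm u k
  -- bound per sign
  have hp : ∑ i, αp k i ≤ C := by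
    rw [hC]
    have h1 : ∑ i, αp k i ≤ ∑ i, (αp k i + αm k i) :=
      Finset.sum_le_sum fun i _ => le_add_of_nonneg_right (hαm0 k i)
    have h2 : ∑ i, (αp k i + αm k i) ≤ ∑ k', ∑ i, (αp k' i + αm k' i) :=
      Finset.single_le_sum (f := fun k' => ∑ i, (αp k' i + αm k' i))
        (fun k' _ => Finset.sum_nonneg fun i _ => add_nonneg (hαp0 k' i) (hαm0 k' i))
        (Finset.mem_univ k)
    linarith
  have hm : ∑ i, αm k i ≤ C := by
    rw [hC]
    have h1 : ∑ i, αm k i ≤ ∑ i, (αp k i + αm k i) :=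
      Finset.sum_le_sum fun i _ => le_add_of_nonneg_left (hαp0 k i)
    have h2 : ∑ i, (αp k i + αm k i) ≤ ∑ k', ∑ i, (αp k' i + αm k' i) :=
      Finset.single_le_sum (f := fun k' => ∑ i, (αp k' i + αm k' i))
        (fun k' _ => Finset.sum_nonneg fun i _ => add_nonneg (hαp0 k' i) (hαm0 k' i))
        (Finset.mem_univ k)
    linarith
  have hsingle : ∑ j, (Pi.single k 1 : Fin m → ℝ) j * u j = u k := by
    rw [Finset.sum_eq_single k]
    · simp
    · intro j _ hj; rw [Pi.single_eq_of_ne hj, zero_mul]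
    · intro h; exact absurd (Finset.mem_univ k) h
  have hmain : ‖u‖ ≤ C * ψ u := by
    rw [hnorm]
    rcases le_or_gt 0 (u k) with h | h
    · rw [abs_of_nonneg h]
      have := key _ _ (hαp0 k) (hαp k)
      rw [hsingle] at this
      calc u k ≤ (∑ i, αp k i) * ψ u := this
      _ ≤ C * ψ u := mul_le_mul_of_nonneg_right hp hψpos.le
    · rw [abs_of_neg h]
      have := key _ _ (hαm0 k) (hαm k)
      have hneg : ∑ j, (-(Pi.single k 1) : Fin m → ℝ) j * u j = -u k := by
        simp only [Pi.neg_apply, neg_mul, Finset.sum_neg_distrib]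
        rw [hsingle]
      rw [hneg] at this
      calc -u k ≤ (∑ i, αm k i) * ψ u := this
      _ ≤ C * ψ u := mul_le_mul_of_nonneg_right hm hψpos.le
  rw [inv_mul_le_iff₀ hCpos]
  exact hmain
end

section
/- Let X ⊆ ℝ^p and Z ⊆ ℝ^q be compact nonempty sets and f : ℝ^p × ℝ^q → ℝ continuous and bounded below on X × Z. Suppose a sequence (x^k, z^k) ∈ X × Z satisfies the Gauss-Seidel conditions: f(x^{k+1}, z^k) ≤ f(x, z^k) for all x ∈ X, and f(x^{k+1}, z^{k+1}) ≤ f(x^{k+1}, z) for all z ∈ Z, for every k. Then any limit point (x*, z*) of the sequence is a partial minimum: f(x*, z*) ≤ f(x, z*) for all x ∈ X and f(x*, z*) ≤ f(x*, z) for all z ∈ Z. -/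
open Filter Topology

/-- Limit points of Gauss-Seidel iterates are partial minima. -/
theorem stmt_16 {p q : ℕ} (X : Set (Fin p → ℝ)) (Z : Set (Fin q → ℝ))
    (hX : IsCompact X) (hZ : IsCompact Z) (hXne : X.Nonempty) (hZne : Z.Nonempty)
    (f : (Fin p → ℝ) → (Fin q → ℝ) → ℝ)
    (hf : Continuous fun pr : (Fin p → ℝ) × (Fin q → ℝ) => f pr.1 pr.2)
    (B : ℝ) (hB : ∀ x ∈ X, ∀ z ∈ Z, B ≤ f x z)
    (x : ℕ → (Fin p → ℝ)) (z : ℕ → (Fin q → ℝ))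
    (hxX : ∀ k, x k ∈ X) (hzZ : ∀ k, z k ∈ Z)
    (hGSx : ∀ k, ∀ x' ∈ X, f (x (k+1)) (z k) ≤ f x' (z k))
    (hGSz : ∀ k, ∀ z' ∈ Z, f (x (k+1)) (z (k+1)) ≤ f (x (k+1)) z')
    (xs : Fin p → ℝ) (zs : Fin q → ℝ) (φ : ℕ → ℕ) (hφ : StrictMono φ)
    (hlim : Tendsto (fun k => (x (φ k), z (φ k))) atTop (𝓝 (xs, zs))) :
    (∀ x' ∈ X, f xs zs ≤ f x' zs) ∧ (∀ z' ∈ Z, f xs zs ≤ f xs z') := by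
  set F : ℕ → ℝ := fun k => f (x k) (z k) with hF
  have h1 : ∀ k, f (x (k+1)) (z k) ≤ F k := fun k => hGSx k (x k) (hxX k)
  have h2 : ∀ k, F (k+1) ≤ f (x (k+1)) (z k) := fun k => hGSz k (z k) (hzZ k)
  have hanti : Antitone F := antitone_nat_of_succ_le fun k => (h2 k).trans (h1 k)
  have hbdd : BddBelow (Set.range F) := ⟨B, by
    rintro _ ⟨k, rfl⟩; exact hB _ (hxX k) _ (hzZ k)⟩
  set L : ℝ := ⨅ k, F k with hLdef
  have hL : Tendsto F atTop (𝓝 L) := tendsto_atTop_ciInf hanti hbdd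
  have hφtop : Tendsto φ atTop atTop := hφ.tendsto_atTop
  -- limits of components
  have hx_lim : Tendsto (fun m => x (φ m)) atTop (𝓝 xs) :=
    (continuous_fst.tendsto _).comp hlim
  have hz_lim : Tendsto (fun m => z (φ m)) atTop (𝓝 zs) :=
    (continuous_snd.tendsto _).comp hlim
  have hFφ : Tendsto (fun m => F (φ m)) atTop (𝓝 L) := hL.comp hφtop
  have hFφ' : Tendsto (fun m => F (φ m)) atTop (𝓝 (f xs zs)) :=
    (hf.tendsto (xs, zs)).comp hlim
  have hLeq : L = f xs zs := tendsto_nhds_unique hFφ hFφ'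
  constructor
  · intro x' hx'
    -- f (x (φ m + 1)) (z (φ m)) → L by squeeze
    have hsucc : Tendsto (fun m => φ m + 1) atTop atTop :=
      tendsto_atTop_mono (fun m => Nat.le_succ _) hφtop
    have hFsucc : Tendsto (fun m => F (φ m + 1)) atTop (𝓝 L) := hL.comp hsucc
    have hg : Tendsto (fun m => f (x (φ m + 1)) (z (φ m))) atTop (𝓝 L) :=
      tendsto_of_tendsto_of_tendsto_of_le_of_le hFsucc hFφ
        (fun m => h2 (φ m)) (fun m => h1 (φ m))
    have hrhs : Tendsto (fun m => f x' (z (φ m))) atTop (𝓝 (f x' zs)) :=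
      (hf.tendsto (x', zs)).comp (tendsto_const_nhds.prodMk_nhds hz_lim)
    rw [← hLeq]
    exact le_of_tendsto_of_tendsto' hg hrhs fun m => hGSx (φ m) x' hx'
  · intro z' hz'
    have hrhs : Tendsto (fun m => f (x (φ m)) z') atTop (𝓝 (f xs z')) :=
      (hf.tendsto (xs, z')).comp (hx_lim.prodMk_nhds tendsto_const_nhds)
    refine le_of_tendsto_of_tendsto hFφ' hrhs ?_
    filter_upwards [eventually_ge_atTop 1] with m hm
    have hφm : 1 ≤ φ m := le_trans hm (hφ.le_apply)
    have : φ m - 1 + 1 = φ m := Nat.succ_pred_eq_of_pos hφm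
    have h := hGSz (φ m - 1) z' hz'
    rw [this] at h
    exact h
end
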